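/- Let A and B be parity automata over finite alphabet Σ with B deterministic and complete, and let L_{A,B} be their disjoint union with v(x)=s_A, v(y)=s_B the two initial states. For priorities n (of A) and m (of B) let φ_{n,m} := ⟨synch⟩* νZ. ⟨synch'⟩⁺( prty_n(x) ∧ ⟨synch'⟩⁺( prty_m(y) ∧ Z ) ), where ⟨synch⟩φ := ⋁_{a∈Σ}⟨a⟩_x⟨a⟩_y φ and ⟨synch'⟩⁺φ := μZ'. ⟨synch⟩( prty_{≤n}(x) ∧ prty_{≤m}(y) ∧ (φ ∨ Z') ). Then L(A) ⊄ L(B) if and only if there exist an even n and an odd m such that L_{A,B}, v ⊨ φ_{n,m}. -/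

import Mathlib

/-- A labeled transition system over edge labels `Λ` and atomic propositions `P`. -/
structure LTS (Λ P : Type) where
  S : Type
  s0 : S
  Tr : S → Λ → S → Prop
  rho : S → Set P

/-- Formulas of the higher-dimensional modal μ-calculus Lμω. -/
inductive Formula (Λ P V V2 : Type) : Type
  | prop : P → V → Formula Λ P V V2
  | svar : V2 → Formula Λ P V V2
  | neg : Formula Λ P V V2 → Formula Λ P V V2
  | and : Formula Λ P V V2 → Formula Λ P V V2 → Formula Λ P V V2
  | dia : Λ → V → Formula Λ P V V2 → Formula Λ P V V2
  | mu : V2 → Formula Λ P V V2 → Formula Λ P V V2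
  | repl : (V → V) → Formula Λ P V V2 → Formula Λ P V V2

variable {Λ P V V2 : Type}

/-- Semantics of Lμω : a set of first-order valuations. -/
def sem [DecidableEq V] [DecidableEq V2] (L : LTS Λ P) :
    Formula Λ P V V2 → (V2 → Set (V → L.S)) → Set (V → L.S)
  | .prop p x, _ => {v | p ∈ L.rho (v x)}
  | .svar X, 𝒱 => 𝒱 X
  | .neg φ, 𝒱 => (sem L φ 𝒱)ᶜ
  | .and φ ψ, 𝒱 => sem L φ 𝒱 ∩ sem L ψ 𝒱
  | .dia a x φ, 𝒱 => {v | ∃ s, L.Tr (v x) a s ∧ Function.update v x s ∈ sem L φ 𝒱}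
  | .mu X φ, 𝒱 => ⋂₀ {Q | sem L φ (Function.update 𝒱 X Q) ⊆ Q}
  | .repl κ φ, 𝒱 => {v | (fun z => v (κ z)) ∈ sem L φ 𝒱}

/-- Derived operator: disjunction. -/
def Formula.or (φ ψ : Formula Λ P V V2) : Formula Λ P V V2 := .neg (.and (.neg φ) (.neg ψ))

/-- Derived operator: box modality. -/
def Formula.box (a : Λ) (x : V) (φ : Formula Λ P V V2) : Formula Λ P V V2 :=
  .neg (.dia a x (.neg φ))

/-- Replace every occurrence of the second-order variable `X` by `¬X`. -/
def Formula.substNeg [DecidableEq V2] (X : V2) : Formula Λ P V V2 → Formula Λ P V V2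
  | .prop p x => .prop p x
  | .svar Y => if Y = X then .neg (.svar Y) else .svar Y
  | .neg φ => .neg (φ.substNeg X)
  | .and φ ψ => .and (φ.substNeg X) (ψ.substNeg X)
  | .dia a x φ => .dia a x (φ.substNeg X)
  | .mu Y φ => .mu Y (φ.substNeg X)
  | .repl κ φ => .repl κ (φ.substNeg X)

/-- Derived operator: greatest fixed point, `νX.φ := ¬μX.¬φ[X:=¬X]`. -/
def Formula.nu [DecidableEq V2] (X : V2) (φ : Formula Λ P V V2) : Formula Λ P V V2 :=
  .neg (.mu X (.neg (φ.substNeg X)))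

/-- Falsity, definable as `μX.X`. -/
def Formula.bot (X : V2) : Formula Λ P V V2 := .mu X (.svar X)

/-- Truth. -/
def Formula.top (X : V2) : Formula Λ P V V2 := .neg (.bot X)

/-- Finite conjunction (`X` is a dummy second-order variable for the empty case). -/
def bigAnd (X : V2) (l : List (Formula Λ P V V2)) : Formula Λ P V V2 := l.foldr .and (.top X)

/-- Finite disjunction. -/
def bigOr (X : V2) (l : List (Formula Λ P V V2)) : Formula Λ P V V2 := l.foldr .or (.bot X)

/-- Derived operator: implication. -/
def Formula.imp (φ ψ : Formula Λ P V V2) : Formula Λ P V V2 := .neg (.and φ (.neg ψ))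

/-- Derived operator: bi-implication. -/
def Formula.iff (φ ψ : Formula Λ P V V2) : Formula Λ P V V2 := .and (φ.imp ψ) (ψ.imp φ)

/-- A run of the automaton (viewed as an LTS) on the infinite word `w`. -/
def IsRun {Alph P : Type} (A : LTS Alph P) (w : ℕ → Alph) (r : ℕ → A.S) : Prop :=
  r 0 = A.s0 ∧ ∀ i, A.Tr (r i) (w i) (r (i + 1))

/-- Determinism of an automaton. -/
def Deterministic {Alph P : Type} (A : LTS Alph P) : Prop :=
  ∀ s a t₁ t₂, A.Tr s a t₁ → A.Tr s a t₂ → t₁ = t₂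

/-- Completeness of an automaton. -/
def Complete {Alph P : Type} (A : LTS Alph P) : Prop :=
  ∀ s a, ∃ t, A.Tr s a t

/-- The disjoint union of two LTSs (with the initial state of the first one). -/
def dunion {Alph P : Type} (A B : LTS Alph P) : LTS Alph P where
  S := A.S ⊕ B.S
  s0 := .inl A.s0
  Tr := fun s a t =>
    match s, t with
    | .inl s, .inl t => A.Tr s a t
    | .inr s, .inr t => B.Tr s a t
    | _, _ => False
  rho := fun s => match s with | .inl s => A.rho s | .inr s => B.rho s

/-- `⟨synch⟩φ := ⋁_{a∈Σ} ⟨a⟩_x ⟨a⟩_y φ`, with `x`, `y` being the variables `0`, `1`. -/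
noncomputable def synch {Alph P : Type} [Fintype Alph] (φ : Formula Alph P (Fin 2) ℕ) :
    Formula Alph P (Fin 2) ℕ :=
  bigOr 9 ((Finset.univ : Finset Alph).toList.map fun a => .dia a 0 (.dia a 1 φ))

/-- A parity automaton is a finite LTS whose propositions are the priority predicates
`prty_k` (`k : ℕ`), every state being labeled with exactly one priority. -/
def IsParityAutomaton {Alph : Type} (A : LTS Alph ℕ) : Prop :=
  ∀ s : A.S, ∃ k : ℕ, A.rho s = {k}

/-- Priority `k` is visited infinitely often along the run `r`. -/
def InfOften {Alph : Type} (A : LTS Alph ℕ) (r : ℕ → A.S) (k : ℕ) : Prop :=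
  ∀ N, ∃ i, N ≤ i ∧ k ∈ A.rho (r i)

/-- The language of a parity automaton: words with some run along which the largest
priority visited infinitely often is even. -/
def ParityLang {Alph : Type} (A : LTS Alph ℕ) : Set (ℕ → Alph) :=
  {w | ∃ r, IsRun A w r ∧
    ∃ k, Even k ∧ InfOften A r k ∧ ∀ j, InfOften A r j → j ≤ k}

/-- `prty_{≤ n}(x) := prty_0(x) ∨ … ∨ prty_n(x)`. -/
def prtyLe {Alph : Type} (n : ℕ) (x : Fin 2) : Formula Alph ℕ (Fin 2) ℕ :=
  bigOr 9 ((List.range (n + 1)).map fun k => .prop k x)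

/-- `⟨synch'⟩⁺φ := μZ'. ⟨synch⟩( prty_{≤n}(x) ∧ prty_{≤m}(y) ∧ (φ ∨ Z') )`,
with `z` the index of the second-order variable `Z'`. -/
noncomputable def synchPlus {Alph : Type} [Fintype Alph] (z n m : ℕ)
    (φ : Formula Alph ℕ (Fin 2) ℕ) : Formula Alph ℕ (Fin 2) ℕ :=
  .mu z (synch (.and (prtyLe n 0) (.and (prtyLe m 1) (.or φ (.svar z)))))

/-- `φ_{n,m} := ⟨synch⟩* νZ.⟨synch'⟩⁺( prty_n(x) ∧ ⟨synch'⟩⁺( prty_m(y) ∧ Z ) )`,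
where `⟨synch⟩*ψ := μZ₀. ψ ∨ ⟨synch⟩Z₀`; here `Z = 0`, the two `Z'` are `1`, `2`,
and `Z₀ = 3`. -/
noncomputable def phiNM {Alph : Type} [Fintype Alph] (n m : ℕ) :
    Formula Alph ℕ (Fin 2) ℕ :=
  .mu 3 (.or
    (Formula.nu 0 (synchPlus 1 n m
      (.and (.prop n 0) (synchPlus 2 n m (.and (.prop m 1) (.svar 0))))))
    (synch (.svar 3)))

/-! `φ_{n,m}` holds at a pair of states iff some synchronised path from it eventually keeps
the priorities of its components bounded by `n` and `m` while visiting `n` (in `x`) and `m`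
(in `y`) infinitely often: the inner `μ`s describe the finite bounded stretches, `νZ` their
infinite repetition, and the outer `μ` the unconstrained prefix. Such paths in `L_{A,B}` are
exactly pairs of a run of `A` and the (unique) run of `B` on a common word. For a finite
parity automaton, "`n` is the largest priority seen infinitely often" is equivalent to "`n`
is seen infinitely often and eventually no priority exceeds `n`", so the path condition says
exactly that `A` accepts the word with top priority `n` while `B` rejects it with top
priority `m`. -/

open Function Relation Filter

section Semantics

variable {Λ P V V2 : Type}

def Formula.NotBound (X : V2) : Formula Λ P V V2 → Prop
  | .prop _ _ | .svar _ => True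
  | .neg φ | .dia _ _ φ | .repl _ φ => φ.NotBound X
  | .and φ ψ => φ.NotBound X ∧ ψ.NotBound X
  | .mu Y φ => Y ≠ X ∧ φ.NotBound X

theorem Formula.notBound_bigOr (X Y : V2) (l : List (Formula Λ P V V2)) :
    (bigOr Y l).NotBound X ↔ Y ≠ X ∧ ∀ φ ∈ l, φ.NotBound X := by
  induction l with
  | nil => simp [bigOr, Formula.bot, Formula.NotBound]
  | cons φ l ih =>
    change (φ.or (bigOr Y l)).NotBound X ↔ _
    simp [Formula.or, Formula.NotBound, ih, and_left_comm]

variable [DecidableEq V] [DecidableEq V2] (L : LTS Λ P)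

theorem sem_or (φ ψ : Formula Λ P V V2) (𝒱 : V2 → Set (V → L.S)) :
    sem L (φ.or ψ) 𝒱 = sem L φ 𝒱 ∪ sem L ψ 𝒱 := by
  simp [Formula.or, sem, Set.compl_inter]

theorem sem_bot (X : V2) (𝒱 : V2 → Set (V → L.S)) :
    sem L (Formula.bot X : Formula Λ P V V2) 𝒱 = ∅ :=
  Set.sInter_eq_empty_iff.2 fun v => ⟨∅, by simp [sem], id⟩

theorem mem_sem_bigOr (X : V2) (l : List (Formula Λ P V V2)) (𝒱 : V2 → Set (V → L.S))
    (v : V → L.S) : v ∈ sem L (bigOr X l) 𝒱 ↔ ∃ φ ∈ l, v ∈ sem L φ 𝒱 := by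
  induction l with
  | nil => simp [bigOr, sem_bot]
  | cons φ l ih =>
    change v ∈ sem L (φ.or (bigOr X l)) 𝒱 ↔ _
    simp [sem_or, ih]

theorem sem_substNeg (X : V2) (φ : Formula Λ P V V2) (h : φ.NotBound X)
    (𝒱 : V2 → Set (V → L.S)) : sem L (φ.substNeg X) 𝒱 = sem L φ (update 𝒱 X (𝒱 X)ᶜ) := by
  induction φ generalizing 𝒱 with
  | prop p x => rfl
  | svar Y =>
    by_cases hY : Y = X
    · subst hY; simp [Formula.substNeg, sem]
    · simp [Formula.substNeg, hY, sem]
  | neg φ ih => simp only [Formula.substNeg, sem, ih h]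
  | and φ ψ ihφ ihψ => simp only [Formula.substNeg, sem, ihφ h.1, ihψ h.2]
  | dia a x φ ih => simp only [Formula.substNeg, sem, ih h]
  | mu Y φ ih =>
    simp only [Formula.substNeg, sem, ih h.2, update_of_ne h.1.symm, update_comm h.1.symm]
  | repl κ φ ih => simp only [Formula.substNeg, sem, ih h]

theorem mem_sem_nu (X : V2) (φ : Formula Λ P V V2) (h : φ.NotBound X)
    (𝒱 : V2 → Set (V → L.S)) (v : V → L.S) :
    v ∈ sem L (φ.nu X) 𝒱 ↔ ∃ Q, Q ⊆ sem L φ (update 𝒱 X Q) ∧ v ∈ Q := by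
  simp only [Formula.nu, sem, sem_substNeg L X φ h, update_idem, update_self,
    Set.mem_compl_iff, Set.mem_sInter, Set.mem_ofPred_eq, not_forall, exists_prop]
  constructor
  · rintro ⟨Q, hQ, hv⟩
    exact ⟨Qᶜ, Set.compl_subset_comm.1 hQ, hv⟩
  · rintro ⟨Q, hQ, hv⟩
    exact ⟨Qᶜ, by simpa [compl_compl] using Set.compl_subset_compl.2 hQ, by simpa using hv⟩

end Semantics

section Relations

variable {α : Type*} {R : α → α → Prop}

theorem transGen_of_forall_succ {r : ℕ → α} (h : ∀ i, R (r i) (r (i + 1))) {i j : ℕ}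
    (hij : i < j) : TransGen R (r i) (r j) :=
  (transGen_of_succ_of_lt (fun a b => R (r a) (r b)) (fun k _ => h k) hij).lift r fun _ _ => id

theorem reflTransGen_of_forall_succ {r : ℕ → α} (h : ∀ i, R (r i) (r (i + 1))) {i j : ℕ}
    (hij : i ≤ j) : ReflTransGen R (r i) (r j) :=
  (reflTransGen_of_succ_of_le (fun a b => R (r a) (r b)) (fun k _ => h k) hij).lift r fun _ _ => id

theorem sInter_closed_eq_transGen (S : Set α) :
    ⋂₀ {Q | {x | ∃ y, R x y ∧ (y ∈ S ∨ y ∈ Q)} ⊆ Q} = {x | ∃ y, TransGen R x y ∧ y ∈ S} := by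
  refine subset_antisymm (fun x hx => Set.mem_sInter.1 hx _ ?_) ?_
  · rintro x ⟨y, hxy, hy | ⟨z, hyz, hz⟩⟩
    exacts [⟨y, .single hxy, hy⟩, ⟨z, .head hxy hyz, hz⟩]
  · rintro x ⟨y, hxy, hy⟩ Q hQ
    induction hxy using TransGen.head_induction_on with
    | single h => exact hQ ⟨_, h, .inl hy⟩
    | head h _ ih => exact hQ ⟨_, h, .inr ih⟩

theorem sInter_closed_eq_reflTransGen (S : Set α) :
    ⋂₀ {Q | S ∪ {x | ∃ y, R x y ∧ y ∈ Q} ⊆ Q} = {x | ∃ y, ReflTransGen R x y ∧ y ∈ S} := by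
  refine subset_antisymm (fun x hx => Set.mem_sInter.1 hx _ ?_) ?_
  · rintro x (hx | ⟨y, hxy, z, hyz, hz⟩)
    exacts [⟨x, .refl, hx⟩, ⟨z, .head hxy hyz, hz⟩]
  · rintro x ⟨y, hxy, hy⟩ Q hQ
    induction hxy using ReflTransGen.head_induction_on with
    | refl => exact hQ (.inl hy)
    | head h _ ih => exact hQ (.inr ⟨_, h, ih⟩)

theorem exists_chain_of_forall_exists {S : Set α} (hS : ∀ x ∈ S, ∃ y, R x y ∧ y ∈ S) {x : α}
    (hx : x ∈ S) : ∃ c : ℕ → α, c 0 = x ∧ ∀ j, R (c j) (c (j + 1)) := by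
  choose f hf using fun y : S => hS y y.2
  refine ⟨fun j => ((fun y : S => (⟨f y, (hf y).2⟩ : S))^[j] ⟨x, hx⟩).1, rfl, fun j => ?_⟩
  simp only [iterate_succ_apply']
  exact (hf _).1

theorem exists_path_of_transGen {x y : α} (h : TransGen R x y) :
    ∃ k, 0 < k ∧ ∃ p : ℕ → α, p 0 = x ∧ p k = y ∧ ∀ i < k, R (p i) (p (i + 1)) := by
  induction h using TransGen.head_induction_on with
  | @single x hxy => exact ⟨1, one_pos, fun i => if i = 0 then x else y, by simp, by simp,
      fun i hi => by simpa [Nat.lt_one_iff.1 hi] using hxy⟩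
  | @head x z hxz _ ih =>
    obtain ⟨k, -, p, hp0, hpk, hp⟩ := ih
    refine ⟨k + 1, k.succ_pos, fun i => if i = 0 then x else p (i - 1), by simp, by simpa, ?_⟩
    rintro (_ | i) hi
    · simpa [hp0] using hxz
    · simpa using hp i (by omega)

/-- The path concatenates finite paths witnessing the `TransGen` steps; a position in it is
tracked as (segment index, offset). Segments are nonempty, so the `j`-th starts at time `≥ j`. -/
theorem exists_path_of_transGen_chain (c : ℕ → α) (h : ∀ j, TransGen R (c j) (c (j + 1))) :
    ∃ r : ℕ → α, r 0 = c 0 ∧ (∀ t, R (r t) (r (t + 1))) ∧ ∀ j, ∃ t ≥ j, r t = c j := by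
  choose k hk p hp0 hpk hp using fun j => exists_path_of_transGen (h j)
  let next : ℕ × ℕ → ℕ × ℕ := fun q => if q.2 + 1 < k q.1 then (q.1, q.2 + 1) else (q.1 + 1, 0)
  let pos : ℕ → ℕ × ℕ := fun t => next^[t] (0, 0)
  have pos_succ : ∀ t, pos (t + 1) = next (pos t) := fun t => iterate_succ_apply' _ _ _
  have pos_lt : ∀ t, (pos t).2 < k (pos t).1 := by
    intro t
    induction t with
    | zero => exact hk 0
    | succ t ih =>
      rw [pos_succ]
      by_cases hlt : (pos t).2 + 1 < k (pos t).1 <;> simp [next, hlt, hk]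
  have pos_offset : ∀ t j, pos t = (j, 0) → ∀ i < k j, pos (t + i) = (j, i) := by
    intro t j ht i hi
    induction i with
    | zero => exact ht
    | succ i ih => rw [← add_assoc, pos_succ, ih (by omega)]; simp [next, hi]
  refine ⟨fun t => p (pos t).1 (pos t).2, hp0 0, fun t => ?_, ?_⟩
  · show R (p (pos t).1 (pos t).2) (p (pos (t + 1)).1 (pos (t + 1)).2)
    rw [pos_succ]
    by_cases hlt : (pos t).2 + 1 < k (pos t).1
    · simpa [next, hlt] using hp _ _ (pos_lt t)
    · have hend : (pos t).2 + 1 = k (pos t).1 := by have := pos_lt t; omega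
      simpa [next, hlt, hp0, ← hpk, ← hend] using hp _ _ (pos_lt t)
  · suffices ∀ j, ∃ t ≥ j, pos t = (j, 0) from
      fun j => (this j).imp fun t ⟨hjt, ht⟩ => ⟨hjt, by simp [ht, hp0]⟩
    intro j
    induction j with
    | zero => exact ⟨0, le_rfl, rfl⟩
    | succ j ih =>
      obtain ⟨t, hjt, ht⟩ := ih
      refine ⟨t + (k j - 1) + 1, by have := hk j; omega, ?_⟩
      rw [pos_succ, pos_offset t j ht _ (by have := hk j; omega)]
      simp [next, show k j - 1 + 1 = k j by have := hk j; omega]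

end Relations

section Paths

variable {Alph : Type}

/-- The state predicate `prty_{≤n}`. -/
def HasPrtyLe (L : LTS Alph ℕ) (n : ℕ) (s : L.S) : Prop :=
  ∃ k ≤ n, k ∈ L.rho s

theorem infOften_comp_add_iff (L : LTS Alph ℕ) (r : ℕ → L.S) (N k : ℕ) :
    InfOften L (fun i => r (i + N)) k ↔ InfOften L r k := by
  refine ⟨fun h M => ?_, fun h M => ?_⟩
  · obtain ⟨i, hi, hk⟩ := h M
    exact ⟨i + N, by omega, hk⟩
  · obtain ⟨i, hi, hk⟩ := h (M + N)
    exact ⟨i - N, by omega, by simpa [Nat.sub_add_cancel (show N ≤ i by omega)]⟩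

def SynchStep {P : Type} (L : LTS Alph P) (v w : Fin 2 → L.S) : Prop :=
  ∃ a, L.Tr (v 0) a (w 0) ∧ L.Tr (v 1) a (w 1)

variable (L : LTS Alph ℕ) (n m : ℕ)

def BoundedStep (v w : Fin 2 → L.S) : Prop :=
  SynchStep L v w ∧ HasPrtyLe L n (w 0) ∧ HasPrtyLe L m (w 1)

def GoodLoop (v w : Fin 2 → L.S) : Prop :=
  ∃ u, TransGen (BoundedStep L n m) v u ∧ n ∈ L.rho (u 0) ∧
    TransGen (BoundedStep L n m) u w ∧ m ∈ L.rho (w 1)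

def IsFairPath (r : ℕ → Fin 2 → L.S) : Prop :=
  (∀ i, BoundedStep L n m (r i) (r (i + 1))) ∧
    InfOften L (fun i => r i 0) n ∧ InfOften L (fun i => r i 1) m

def IsEventuallyFairPath (r : ℕ → Fin 2 → L.S) : Prop :=
  (∀ i, SynchStep L (r i) (r (i + 1))) ∧
    InfOften L (fun i => r i 0) n ∧ InfOften L (fun i => r i 1) m ∧
    ∃ N, ∀ i ≥ N, HasPrtyLe L n (r i 0) ∧ HasPrtyLe L m (r i 1)

variable {L n m}

theorem IsFairPath.comp_add {r : ℕ → Fin 2 → L.S} (h : IsFairPath L n m r) (N : ℕ) :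
    IsFairPath L n m fun i => r (i + N) :=
  ⟨fun i => by simpa [add_right_comm] using h.1 (i + N),
    (infOften_comp_add_iff L (fun i => r i 0) N n).2 h.2.1,
    (infOften_comp_add_iff L (fun i => r i 1) N m).2 h.2.2⟩

theorem IsFairPath.exists_goodLoop {r : ℕ → Fin 2 → L.S} (h : IsFairPath L n m r) :
    ∃ N, GoodLoop L n m (r 0) (r N) ∧ IsFairPath L n m fun i => r (i + N) := by
  obtain ⟨i, hi, hn⟩ := h.2.1 1
  obtain ⟨j, hj, hm⟩ := h.2.2 (i + 1)
  exact ⟨j, ⟨r i, transGen_of_forall_succ h.1 (by omega), hn,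
    transGen_of_forall_succ h.1 (by omega), hm⟩, h.comp_add j⟩

theorem exists_isFairPath_of_goodLoop_chain (c : ℕ → Fin 2 → L.S)
    (hc : ∀ j, GoodLoop L n m (c j) (c (j + 1))) : ∃ r, r 0 = c 0 ∧ IsFairPath L n m r := by
  choose u hcu hu huc hcm using hc
  let e : ℕ → Fin 2 → L.S := fun t => if t % 2 = 0 then c (t / 2) else u (t / 2)
  have he_even : ∀ j, e (2 * j) = c j := fun j => by simp [e]
  have he_odd : ∀ j, e (2 * j + 1) = u j := fun j => by simp [e, Nat.add_mod, Nat.add_div]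
  have he : ∀ t, TransGen (BoundedStep L n m) (e t) (e (t + 1)) := by
    intro t
    obtain ⟨j, rfl | rfl⟩ := Nat.even_or_odd' t
    · rw [he_even, he_odd]
      exact hcu j
    · rw [he_odd, show 2 * j + 1 + 1 = 2 * (j + 1) by ring, he_even]
      exact huc j
  obtain ⟨r, hr0, hr, hre⟩ := exists_path_of_transGen_chain e he
  refine ⟨r, by simpa using hr0.trans (he_even 0), hr, fun N => ?_, fun N => ?_⟩
  · obtain ⟨t, ht, hrt⟩ := hre (2 * N + 1)
    exact ⟨t, by omega, by simpa [hrt, he_odd] using hu N⟩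
  · obtain ⟨t, ht, hrt⟩ := hre (2 * (N + 1))
    exact ⟨t, by omega, by simpa [hrt, he_even] using hcm N⟩

variable (L n m)

theorem exists_reflTransGen_isFairPath_iff (v : Fin 2 → L.S) :
    (∃ u, ReflTransGen (SynchStep L) v u ∧ ∃ r, r 0 = u ∧ IsFairPath L n m r) ↔
      ∃ r, r 0 = v ∧ IsEventuallyFairPath L n m r := by
  constructor
  · rintro ⟨u, hvu, hu⟩
    induction hvu using ReflTransGen.head_induction_on with
    | refl =>
      obtain ⟨r, hr0, hr, hinf0, hinf1⟩ := hu
      refine ⟨r, hr0, fun i => (hr i).1, hinf0, hinf1, 1, fun i hi => ?_⟩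
      obtain ⟨j, rfl⟩ := Nat.exists_eq_add_of_le' hi
      exact (hr j).2
    | @head w w' hstep _ ih =>
      obtain ⟨r, rfl, hr, hinf0, hinf1, N, hN⟩ := ih
      refine ⟨fun i => if i = 0 then w else r (i - 1), rfl, ?_, ?_, ?_, N + 1, fun i hi => ?_⟩
      · rintro (_ | i)
        · simpa using hstep
        · simpa using hr i
      · exact (infOften_comp_add_iff L _ 1 n).1 (by simpa using hinf0)
      · exact (infOften_comp_add_iff L _ 1 m).1 (by simpa using hinf1)
      · simpa [show i ≠ 0 by omega] using hN (i - 1) (by omega)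
  · rintro ⟨r, rfl, hr, hinf0, hinf1, N, hN⟩
    refine ⟨r N, reflTransGen_of_forall_succ hr N.zero_le, fun i => r (i + N), by simp,
      fun i => ⟨by simpa [add_right_comm] using hr (i + N), ?_⟩,
      (infOften_comp_add_iff L (fun i => r i 0) N n).2 hinf0,
      (infOften_comp_add_iff L (fun i => r i 1) N m).2 hinf1⟩
    simpa [add_right_comm] using hN (i + 1 + N) (by omega)

end Paths

section SemPhiNM

variable {Alph : Type}

theorem mem_sem_prtyLe (L : LTS Alph ℕ) (n : ℕ) (x : Fin 2) (𝒱 : ℕ → Set (Fin 2 → L.S))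
    (v : Fin 2 → L.S) : v ∈ sem L (prtyLe n x) 𝒱 ↔ HasPrtyLe L n (v x) := by
  simp [prtyLe, mem_sem_bigOr, sem, HasPrtyLe]

variable [Fintype Alph]

theorem mem_sem_synch {P : Type} (L : LTS Alph P) (φ : Formula Alph P (Fin 2) ℕ)
    (𝒱 : ℕ → Set (Fin 2 → L.S)) (v : Fin 2 → L.S) :
    v ∈ sem L (synch φ) 𝒱 ↔ ∃ w, SynchStep L v w ∧ w ∈ sem L φ 𝒱 := by
  simp only [synch, mem_sem_bigOr, List.mem_map, Finset.mem_toList, Finset.mem_univ, true_and,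
    exists_exists_eq_and, sem, Set.mem_ofPred_eq]
  constructor
  · rintro ⟨a, s, hs, t, ht, hw⟩
    exact ⟨_, ⟨a, by simpa using hs, by simpa using ht⟩, hw⟩
  · rintro ⟨w, ⟨a, h0, h1⟩, hw⟩
    refine ⟨a, w 0, h0, w 1, by simpa using h1, ?_⟩
    convert hw
    funext i
    fin_cases i <;> simp

/-- The formula under `νZ` in `φ_{n,m}`. -/
noncomputable def loopBody (n m : ℕ) : Formula Alph ℕ (Fin 2) ℕ :=
  synchPlus 1 n m (.and (.prop n 0) (synchPlus 2 n m (.and (.prop m 1) (.svar 0))))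

theorem phiNM_eq (n m : ℕ) :
    (phiNM n m : Formula Alph ℕ (Fin 2) ℕ) =
      .mu 3 (.or (Formula.nu 0 (loopBody n m)) (synch (.svar 3))) :=
  rfl

variable (L : LTS Alph ℕ) (n m : ℕ)

theorem mem_sem_synchPlus (z : ℕ) (φ : Formula Alph ℕ (Fin 2) ℕ) (𝒱 : ℕ → Set (Fin 2 → L.S))
    (hφ : ∀ Q, sem L φ (update 𝒱 z Q) = sem L φ 𝒱) (v : Fin 2 → L.S) :
    v ∈ sem L (synchPlus z n m φ) 𝒱 ↔ ∃ w, TransGen (BoundedStep L n m) v w ∧ w ∈ sem L φ 𝒱 := by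
  have hbody : ∀ Q, sem L (synch (.and (prtyLe n 0) (.and (prtyLe m 1) (.or φ (.svar z)))))
      (update 𝒱 z Q) = {x | ∃ y, BoundedStep L n m x y ∧ (y ∈ sem L φ 𝒱 ∨ y ∈ Q)} := by
    intro Q
    ext x
    simp [mem_sem_synch, sem, sem_or, hφ, mem_sem_prtyLe, BoundedStep, and_assoc]
  rw [synchPlus, sem]
  simp_rw [hbody]
  rw [sInter_closed_eq_transGen]
  rfl

theorem mem_sem_loopBody (𝒱 : ℕ → Set (Fin 2 → L.S)) (v : Fin 2 → L.S) :
    v ∈ sem L (loopBody n m) 𝒱 ↔ ∃ w, GoodLoop L n m v w ∧ w ∈ 𝒱 0 := by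
  have inner : ∀ 𝒱 : ℕ → Set (Fin 2 → L.S),
      sem L (.and (.prop n 0) (synchPlus 2 n m (.and (.prop m 1) (.svar 0)))) 𝒱 =
        {u | n ∈ L.rho (u 0) ∧
          ∃ w, TransGen (BoundedStep L n m) u w ∧ m ∈ L.rho (w 1) ∧ w ∈ 𝒱 0} := by
    intro 𝒱
    ext u
    rw [sem, Set.mem_inter_iff, mem_sem_synchPlus L n m 2 _ 𝒱 fun Q => by simp [sem]]
    simp [sem]
  rw [loopBody, mem_sem_synchPlus L n m 1 _ 𝒱 fun Q => by simp [inner]]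
  simp only [inner, GoodLoop, Set.mem_ofPred_eq]
  constructor
  · rintro ⟨u, hvu, hn, w, huw, hm, hw⟩
    exact ⟨w, ⟨u, hvu, hn, huw, hm⟩, hw⟩
  · rintro ⟨w, ⟨u, hvu, hn, huw, hm⟩, hw⟩
    exact ⟨u, hvu, hn, w, huw, hm, hw⟩

theorem mem_sem_nu_loopBody (𝒱 : ℕ → Set (Fin 2 → L.S)) (v : Fin 2 → L.S) :
    v ∈ sem L (Formula.nu 0 (loopBody n m)) 𝒱 ↔ ∃ r, r 0 = v ∧ IsFairPath L n m r := by
  have hnb : (loopBody n m : Formula Alph ℕ (Fin 2) ℕ).NotBound 0 := by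
    simp [loopBody, synchPlus, synch, prtyLe, Formula.or, Formula.NotBound,
      Formula.notBound_bigOr]
  rw [mem_sem_nu L 0 _ hnb]
  simp only [Set.subset_def, mem_sem_loopBody, update_self]
  constructor
  · rintro ⟨Q, hQ, hv⟩
    obtain ⟨c, rfl, hc⟩ := exists_chain_of_forall_exists hQ hv
    exact exists_isFairPath_of_goodLoop_chain c hc
  · rintro ⟨r, rfl, hr⟩
    refine ⟨{x | ∃ r, r 0 = x ∧ IsFairPath L n m r}, ?_, r, rfl, hr⟩
    rintro _ ⟨r, rfl, hr⟩
    obtain ⟨N, hloop, hfair⟩ := hr.exists_goodLoop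
    exact ⟨r N, hloop, _, by simp, hfair⟩

theorem mem_sem_phiNM_iff_reflTransGen (𝒱 : ℕ → Set (Fin 2 → L.S)) (v : Fin 2 → L.S) :
    v ∈ sem L (phiNM n m) 𝒱 ↔
      ∃ u, ReflTransGen (SynchStep L) v u ∧ ∃ r, r 0 = u ∧ IsFairPath L n m r := by
  have hbody : ∀ Q, sem L (.or (Formula.nu 0 (loopBody n m)) (synch (.svar 3))) (update 𝒱 3 Q) =
      {u | ∃ r, r 0 = u ∧ IsFairPath L n m r} ∪ {x | ∃ y, SynchStep L x y ∧ y ∈ Q} := by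
    intro Q
    ext x
    simp [sem_or, mem_sem_nu_loopBody, mem_sem_synch, sem]
  rw [phiNM_eq, sem]
  simp_rw [hbody]
  rw [sInter_closed_eq_reflTransGen]
  rfl

theorem mem_sem_phiNM_iff (𝒱 : ℕ → Set (Fin 2 → L.S)) (v : Fin 2 → L.S) :
    v ∈ sem L (phiNM n m) 𝒱 ↔ ∃ r, r 0 = v ∧ IsEventuallyFairPath L n m r := by
  rw [mem_sem_phiNM_iff_reflTransGen, exists_reflTransGen_isFairPath_iff]

end SemPhiNM

section ParityAutomata

variable {Alph : Type}

def IsMaxInfOften (C : LTS Alph ℕ) (r : ℕ → C.S) (k : ℕ) : Prop :=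
  InfOften C r k ∧ ∀ j, InfOften C r j → j ≤ k

theorem IsMaxInfOften.unique {C : LTS Alph ℕ} {r : ℕ → C.S} {k₁ k₂ : ℕ}
    (h₁ : IsMaxInfOften C r k₁) (h₂ : IsMaxInfOften C r k₂) : k₁ = k₂ :=
  le_antisymm (h₂.2 k₁ h₁.1) (h₁.2 k₂ h₂.1)

variable {C : LTS Alph ℕ} [Finite C.S]

theorem IsParityAutomaton.exists_isMaxInfOften (hC : IsParityAutomaton C) (r : ℕ → C.S) :
    ∃ k, IsMaxInfOften C r k := by
  choose prio hprio using hC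
  have hfin : {k | InfOften C r k}.Finite := (Set.finite_range prio).subset fun k hk => by
    obtain ⟨i, -, hk⟩ := hk 0
    exact ⟨r i, by simpa [hprio, eq_comm] using hk⟩
  have hne : {k | InfOften C r k}.Nonempty := by
    obtain ⟨s, hs⟩ := frequently_exists.1
      (Frequently.of_forall fun i => ⟨r i, rfl⟩ : ∃ᶠ i in atTop, ∃ s, r i = s)
    exact ⟨prio s, frequently_atTop.1 (hs.mono fun i hi => by simp [hprio, hi])⟩
  obtain ⟨k, hk, hmax⟩ := Set.exists_max_image _ id hfin hne
  exact ⟨k, hk, hmax⟩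

theorem IsParityAutomaton.isMaxInfOften_iff (hC : IsParityAutomaton C) {r : ℕ → C.S} {k : ℕ} :
    IsMaxInfOften C r k ↔ InfOften C r k ∧ ∃ N, ∀ i ≥ N, HasPrtyLe C k (r i) := by
  choose prio hprio using hC
  refine ⟨fun ⟨hk, hmax⟩ => ⟨hk, ?_⟩, fun ⟨hk, N, hN⟩ => ⟨hk, fun j hj => ?_⟩⟩
  · have hle : ∀ᶠ i in atTop, prio (r i) ≤ k := by
      by_contra h
      rw [not_eventually] at h
      obtain ⟨s, hs⟩ := frequently_exists.1
        (h.mono fun i hi => (⟨r i, rfl, hi⟩ : ∃ s, r i = s ∧ ¬prio s ≤ k))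
      obtain ⟨i, -, hi⟩ := hs.exists
      exact hi (hmax _ (frequently_atTop.1 (hs.mono fun i hi => by simp [hprio, hi.1])))
    obtain ⟨N, hN⟩ := eventually_atTop.1 hle
    exact ⟨N, fun i hi => ⟨prio (r i), hN i hi, by simp [hprio]⟩⟩
  · obtain ⟨i, hi, hji⟩ := hj N
    obtain ⟨j', hj', hj'i⟩ := hN i hi
    simp only [hprio, Set.mem_singleton_iff] at hji hj'i
    omega

end ParityAutomata

section DeterministicAutomata

variable {Alph : Type} {B : LTS Alph ℕ}

theorem Deterministic.isRun_unique (hdet : Deterministic B) {w : ℕ → Alph} {r₁ r₂ : ℕ → B.S}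
    (h₁ : IsRun B w r₁) (h₂ : IsRun B w r₂) : r₁ = r₂ := by
  funext i
  induction i with
  | zero => rw [h₁.1, h₂.1]
  | succ i ih => exact hdet _ _ _ _ (h₁.2 i) (ih ▸ h₂.2 i)

theorem Complete.exists_isRun (hcomp : Complete B) (w : ℕ → Alph) : ∃ r, IsRun B w r := by
  choose next hnext using hcomp
  exact ⟨fun i => Nat.rec B.s0 (fun i s => next s (w i)) i, rfl, fun i => hnext _ _⟩

theorem Deterministic.mem_parityLang_iff (hdet : Deterministic B) {w : ℕ → Alph} {r : ℕ → B.S}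
    {m : ℕ} (hr : IsRun B w r) (hm : IsMaxInfOften B r m) : w ∈ ParityLang B ↔ Even m := by
  refine ⟨?_, fun he => ⟨r, hr, m, he, hm⟩⟩
  rintro ⟨r', hr', k, hk, hmax⟩
  rw [hdet.isRun_unique hr' hr] at hmax
  exact IsMaxInfOften.unique hmax hm ▸ hk

end DeterministicAutomata

section DisjointUnion

variable {Alph : Type} (A B : LTS Alph ℕ)

def dunionPair (s : A.S) (t : B.S) : Fin 2 → (dunion A B).S :=
  ![.inl s, .inr t]

theorem exists_eq_dunionPair_of_synchStep {s : A.S} {t : B.S} {u : Fin 2 → (dunion A B).S}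
    (h : SynchStep (dunion A B) (dunionPair A B s t) u) : ∃ s' t', u = dunionPair A B s' t' := by
  obtain ⟨a, h0, h1⟩ := h
  rcases hu0 : u 0 with s' | s' <;> rcases hu1 : u 1 with t' | t' <;>
    simp only [hu0, hu1] at h0 h1 <;> first | exact h0.elim | exact h1.elim | skip
  refine ⟨s', t', funext fun i => ?_⟩
  fin_cases i
  exacts [hu0, hu1]

theorem exists_isRun_of_synchStep {r : ℕ → Fin 2 → (dunion A B).S}
    (hr0 : r 0 = dunionPair A B A.s0 B.s0) (hr : ∀ i, SynchStep (dunion A B) (r i) (r (i + 1))) :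
    ∃ w rA rB, IsRun A w rA ∧ IsRun B w rB ∧ r = fun i => dunionPair A B (rA i) (rB i) := by
  have hpair : ∀ i, ∃ st : A.S × B.S, r i = dunionPair A B st.1 st.2 := by
    intro i
    induction i with
    | zero => exact ⟨(A.s0, B.s0), hr0⟩
    | succ i ih =>
      obtain ⟨st, hi⟩ := ih
      obtain ⟨s', t', h⟩ := exists_eq_dunionPair_of_synchStep A B (hi ▸ hr i)
      exact ⟨(s', t'), h⟩
  choose st hst using hpair
  have hstep : ∀ i, ∃ a, A.Tr (st i).1 a (st (i + 1)).1 ∧ B.Tr (st i).2 a (st (i + 1)).2 := by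
    intro i
    have h := hr i
    rw [hst i, hst (i + 1)] at h
    exact h
  choose w hw using hstep
  have h0 := (hst 0).symm.trans hr0
  exact ⟨w, fun i => (st i).1, fun i => (st i).2, ⟨Sum.inl.inj (congrFun h0 0), fun i => (hw i).1⟩,
    ⟨Sum.inr.inj (congrFun h0 1), fun i => (hw i).2⟩, funext hst⟩

end DisjointUnion

/-- for parity automata `A`, `B` over a finite alphabet, with `B`
deterministic and complete, `L(A) ⊄ L(B)` iff there are an even `n` and an odd `m` such
that `φ_{n,m}` holds in the disjoint union `L_{A,B}` at the valuation sending `x`, `y`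
to the two initial states. -/
theorem parity_noninclusion_iff_phiNM {Alph : Type} [Fintype Alph] (A B : LTS Alph ℕ)
    [Fintype A.S] [Fintype B.S] (hA : IsParityAutomaton A) (hB : IsParityAutomaton B)
    (hdet : Deterministic B) (hcomp : Complete B)
    (v : Fin 2 → (dunion A B).S) (hvx : v 0 = .inl A.s0) (hvy : v 1 = .inr B.s0) :
    ¬ ParityLang A ⊆ ParityLang B ↔
      ∃ n m : ℕ, Even n ∧ Odd m ∧ v ∈ sem (dunion A B) (phiNM n m) (fun _ => ∅) := by
  have hv : v = dunionPair A B A.s0 B.s0 := by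
    funext i
    fin_cases i
    exacts [hvx, hvy]
  simp only [mem_sem_phiNM_iff, hv]
  constructor
  · intro hAB
    obtain ⟨w, ⟨rA, hrA, n, hn, hmaxA⟩, hwB⟩ := Set.not_subset.1 hAB
    obtain ⟨rB, hrB⟩ := hcomp.exists_isRun w
    obtain ⟨m, hmaxB⟩ := hB.exists_isMaxInfOften rB
    have hm : Odd m :=
      Nat.not_even_iff_odd.1 fun he => hwB ((hdet.mem_parityLang_iff hrB hmaxB).2 he)
    obtain ⟨hinfA, NA, hNA⟩ := hA.isMaxInfOften_iff.1 hmaxA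
    obtain ⟨hinfB, NB, hNB⟩ := hB.isMaxInfOften_iff.1 hmaxB
    exact ⟨n, m, hn, hm, fun i => dunionPair A B (rA i) (rB i), by simp only [hrA.1, hrB.1],
      ⟨fun i => ⟨w i, hrA.2 i, hrB.2 i⟩, hinfA, hinfB, max NA NB,
        fun i hi => ⟨hNA i (le_of_max_le_left hi), hNB i (le_of_max_le_right hi)⟩⟩⟩
  · rintro ⟨n, m, hn, hm, r, hr0, hr, hinfA, hinfB, N, hN⟩
    obtain ⟨w, rA, rB, hrA, hrB, rfl⟩ := exists_isRun_of_synchStep A B hr0 hr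
    have hmaxA := hA.isMaxInfOften_iff.2 ⟨hinfA, N, fun i hi => (hN i hi).1⟩
    have hmaxB := hB.isMaxInfOften_iff.2 ⟨hinfB, N, fun i hi => (hN i hi).2⟩
    refine Set.not_subset.2 ⟨w, ⟨rA, hrA, n, hn, hmaxA⟩, fun hwB => ?_⟩
    exact Nat.not_even_iff_odd.2 hm ((hdet.mem_parityLang_iff hrB hmaxB).1 hwB)
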